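/- arXiv:2409.07445 — 3 statements merged into one kernel-verified Lean document; each statement's English description precedes it below -/
import Mathlib

section
/- Let S be a nonempty set, 𝓕 an ultrafilter on S, and for each s ∈ S let 𝕄(U_s,τ_s) be a Moufang set with τ_s = μ_{e_s} for some e_s ∈ U_s^#. Set U := ∏_{s∈S} U_s/𝓕 and define τ on U^# by [(a_s)]τ := [(a_sτ_s)] for any representative (a_s) with a_s ≠ 0 for all s (this is well-defined). Then: (1) for all x = [(x_s)] ∈ U and a = [(a_s)] ∈ U with a_s ≠ 0 for all s, the Hua maps satisfy xh_a = [(x_sh_{a_s})]; in particular 𝕄(U,τ) is a Moufang set; (2) 𝕄(U,τ) is proper if and only if {s ∈ S : 𝕄(U_s,τ_s) is proper} ∈ 𝓕; (3) 𝕄(U,τ) is special if and only if {s ∈ S : 𝕄(U_s,τ_s) is special} ∈ 𝓕; (4) if every 𝕄(U_s,τ_s) is special and T_s ∈ End(U_s) lies in the centroid of 𝕄(U_s,τ_s) for every s, then the induced endomorphism [(T_s)] of U lies in the centroid of 𝕄(U,τ). -/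
/-!
A family `(g_s)` of permutations of the `X_s = U_s ∪ {∞}` acts on `X = U ∪ {∞}` through
representatives, and this is a homomorphism `∏ Sym(X_s) → Sym(X)` whose kernel consists of the
families that are `𝓕`-almost everywhere trivial. Since `α_a`, `τ`, `μ_a` and `h_a` are built from
the `α_{a_s}` and `τ_s` by group operations, they are the images of the corresponding families, and
each root group `U_x` is the image of a product of root groups; so (MS2) holds componentwise and
the Hua subgroup of `𝕄(U,τ)` lies in the image of the product of the Hua subgroups, which gives
the statement on centroids.

When `τ = μ_e`, the Moufang set is improper iff `μ_a` does not depend on `a ∈ U^#`: then `τ² = 1`,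
`τ U_∞^# τ ⊆ U_∞ τ U_∞`, the little projective group lies in `U_∞ ∪ U_∞ τ U_∞`, and its stabiliser
of `∞` and `0` is trivial. Both this criterion and specialness are of the form `∀ a ≠ 0, …` with a
componentwise condition, so they transfer by Łoś's theorem.
-/

namespace MoufangPaper

variable {U : Type*} [AddGroup U]

/-- The translation permutation `α_a` of `X = U ∪ {∞}`, where `∞ = none`. -/
def alpha (a : U) : Equiv.Perm (Option U) := Equiv.optionCongr (Equiv.addRight a)

/-- `U_∞ = {α_a : a ∈ U}`. -/
def Uinf (U : Type*) [AddGroup U] : Subgroup (Equiv.Perm (Option U)) :=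
  Subgroup.closure (Set.range (alpha (U := U)))

/-- Apply a permutation of `X` to a point of `U` and read the value in `U`
(with junk value `0` if the result is `∞`). -/
def pval (g : Equiv.Perm (Option U)) (x : U) : U := (g (some x)).getD 0

/-- The data of the construction `𝕄(U,τ)`: a permutation `τ` of `X = U ∪ {∞}`
interchanging `0` and `∞`. -/
structure MSData (U : Type*) [AddGroup U] where
  τ : Equiv.Perm (Option U)
  τ_zero : τ (some 0) = none
  τ_inf : τ none = some 0

namespace MSData

variable (M : MSData U)

/-- `μ_a = α_a · (α_{-aτ⁻¹})^τ · α_{-(-aτ⁻¹)τ}` (right-action products realised as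
permutations acting on the left). -/
def μ (a : U) : Equiv.Perm (Option U) :=
  alpha (-(pval M.τ (-(pval M.τ⁻¹ a)))) * M.τ * alpha (-(pval M.τ⁻¹ a)) * M.τ⁻¹ * alpha a

open Classical in
/-- The Hua map `h_a = τμ_a` restricted to `U`, with the convention `h_0 = 0`. -/
noncomputable def hua (a : U) (x : U) : U := if a = 0 then 0 else pval (M.μ a * M.τ) x

/-- `h_{a,b} := h_{a+b} − h_a − h_b`. -/
noncomputable def huab (a b x : U) : U := M.hua (a + b) x - M.hua a x - M.hua b x

/-- The family of root groups: `U_∞`, `U_0 := U_∞^τ`, `U_a := U_0^{α_a}`. -/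
def Usub : Option U → Subgroup (Equiv.Perm (Option U))
  | none => Uinf U
  | some a =>
      ((Uinf U).map (MulAut.conj M.τ⁻¹).toMonoidHom).map
        (MulAut.conj (alpha a)⁻¹).toMonoidHom

/-- `𝕄(U,τ)` is a Moufang set: condition (MS2) (condition (MS1) holds by construction). -/
def IsMoufangSet : Prop :=
  ∀ (y : Option U) (g : Equiv.Perm (Option U)), g ∈ M.Usub y →
    ∀ x : Option U, (M.Usub x).map (MulAut.conj g⁻¹).toMonoidHom = M.Usub (g x)

/-- `𝕄(U,τ)` is special: `(−a)τ = −(aτ)` for all `a ∈ U^#`. -/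
def IsSpecial : Prop :=
  ∀ a : U, a ≠ 0 → M.τ (some (-a)) = (M.τ (some a)).map (fun u => -u)

/-- The Hua subgroup `H = ⟨μ_aμ_b : a,b ∈ U^#⟩` (right-action products). -/
def HuaSubgroup : Subgroup (Equiv.Perm (Option U)) :=
  Subgroup.closure {g | ∃ a b : U, a ≠ 0 ∧ b ≠ 0 ∧ g = M.μ b * M.μ a}

/-- `T ∈ End_H(U)`: an additive endomorphism of `U` commuting with the Hua subgroup. -/
def IsEndH (T : U →+ U) : Prop :=
  ∀ g ∈ M.HuaSubgroup, ∀ x : U, T (pval g x) = pval g (T x)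

/-- Membership in the centroid `𝒞 = {T ∈ End_H(U) : h_{aT} = T²h_a for all a ∈ U}`. -/
def InCentroid (T : U →+ U) : Prop :=
  M.IsEndH T ∧ ∀ a x : U, M.hua (T a) x = T (T (M.hua a x))

/-- The little projective group `G† = ⟨U_x : x ∈ X⟩`. -/
def littleProjGroup : Subgroup (Equiv.Perm (Option U)) := ⨆ x : Option U, M.Usub x

/-- Powers with respect to the identity `e`: `a⁰ = e`, `a¹ = a`, `a^{n+2} = aⁿh_a`. -/
noncomputable def pow (e a : U) : ℕ → U
  | 0 => e
  | 1 => a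
  | n + 2 => M.hua a (pow e a n)

/-- `a^{-1} := −(aτ)`. -/
def inv (a : U) : U := -(pval M.τ a)

end MSData

/-- A subgroup of `Sym(X)` is sharply 2-transitive on `X`. -/
def IsSharply2Trans {X : Type*} (G : Subgroup (Equiv.Perm X)) : Prop :=
  ∀ x₁ x₂ y₁ y₂ : X, x₁ ≠ x₂ → y₁ ≠ y₂ →
    ∃! g : G, (g : Equiv.Perm X) x₁ = y₁ ∧ (g : Equiv.Perm X) x₂ = y₂

/-- The Moufang set `𝕄(U,τ)` is proper: its little projective group is not
sharply 2-transitive. -/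
def MSData.IsProper (M : MSData U) : Prop := ¬ IsSharply2Trans M.littleProjGroup

/-- The polarisation `Q_{a,b}` of a quadratic-type map `Q`. -/
def polar {V : Type*} [AddGroup V] (Q : V → V → V) (a b x : V) : V :=
  Q (a + b) x - Q a x - Q b x

/-- `(U, Q, e)` is a quadratic Jordan division algebra over `k`, where the `k`-vector
space structure of `U` is given by a ring embedding `φ : k →+* End(U)`. -/
structure IsQJDA {k : Type*} [Field k] {V : Type*} [AddCommGroup V]
    (φ : k →+* AddMonoid.End V) (Q : V → V → V) (e : V) : Prop where
  e_ne_zero : e ≠ 0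
  add_right : ∀ a x y : V, Q a (x + y) = Q a x + Q a y
  smul_right : ∀ (a : V) (r : k) (x : V), Q a (φ r x) = φ r (Q a x)
  smul_left : ∀ (r : k) (a x : V), Q (φ r a) x = φ (r * r) (Q a x)
  polar_add_left : ∀ a b c x : V, polar Q (a + b) c x = polar Q a c x + polar Q b c x
  polar_smul_left : ∀ (r : k) (a c x : V), polar Q (φ r a) c x = φ r (polar Q a c x)
  bijective : ∀ a : V, a ≠ 0 → Function.Bijective (Q a)
  Q_e : ∀ x, Q e x = x
  qj2 : ∀ a b x : V, polar Q a (Q a x) b = Q a (polar Q b x a)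
  qj3 : ∀ a b x : V, Q (Q b a) x = Q b (Q a (Q b x))

/-- The `k`-module structure on `U` induced by a ring homomorphism `k →+* End(U)`. -/
def moduleOfEnd {k V : Type*} [Semiring k] [AddCommMonoid V]
    (φ : k →+* AddMonoid.End V) : Module k V where
  smul r u := φ r u
  one_smul u := by show φ 1 u = u; simp
  mul_smul r s u := by show φ (r * s) u = φ r (φ s u); simp [map_mul]
  smul_zero r := (φ r).map_zero
  smul_add r u v := (φ r).map_add u v
  add_smul r s u := by show φ (r + s) u = φ r u + φ s u; rw [map_add]; rfl
  zero_smul u := by show φ 0 u = 0; simp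

/-- The normal subgroup of eventually-(w.r.t. an ultrafilter) zero elements of a product
of groups; the quotient by it is the ultraproduct. -/
def eventuallyZero {S : Type*} (F : Ultrafilter S) (Us : S → Type*)
    [∀ s, AddGroup (Us s)] : AddSubgroup (∀ s, Us s) where
  carrier := {x | {s | x s = 0} ∈ (F : Filter S)}
  zero_mem' := by
    have h : {s | (0 : ∀ s, Us s) s = 0} = Set.univ := by ext s; simp
    show {s | (0 : ∀ s, Us s) s = 0} ∈ (F : Filter S)
    rw [h]
    exact Filter.univ_mem
  add_mem' := by
    intro a b ha hb
    apply Filter.mem_of_superset (Filter.inter_mem ha hb)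
    intro s hs
    simp only [Set.mem_inter_iff, Set.mem_setOf_eq] at hs ⊢
    simp [hs.1, hs.2]
  neg_mem' := by
    intro a ha
    apply Filter.mem_of_superset ha
    intro s hs
    simp only [Set.mem_setOf_eq] at hs ⊢
    simp [hs]

instance eventuallyZero_normal {S : Type*} (F : Ultrafilter S) (Us : S → Type*)
    [∀ s, AddGroup (Us s)] : (eventuallyZero F Us).Normal where
  conj_mem := by
    intro x hx g
    apply Filter.mem_of_superset hx
    intro s hs
    simp only [Set.mem_setOf_eq] at hs ⊢
    simp [hs]

section Translations

variable {V : Type*} [AddGroup V]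

@[simp] theorem alpha_none (a : V) : alpha a none = none := rfl

@[simp] theorem alpha_some (a x : V) : alpha a (some x) = some (x + a) := rfl

theorem alpha_mul (a b : V) : alpha a * alpha b = alpha (b + a) := by
  ext x; cases x <;> simp [add_assoc]

@[simp] theorem alpha_zero : alpha (0 : V) = 1 := by
  ext x; cases x <;> simp

theorem alpha_inv (a : V) : (alpha a)⁻¹ = alpha (-a) :=
  inv_eq_of_mul_eq_one_right (by rw [alpha_mul, neg_add_cancel, alpha_zero])

theorem mem_Uinf {g : Equiv.Perm (Option V)} : g ∈ Uinf V ↔ ∃ a : V, alpha a = g := by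
  refine ⟨fun hg => ?_, fun ⟨a, ha⟩ => ha ▸ Subgroup.subset_closure ⟨a, rfl⟩⟩
  induction hg using Subgroup.closure_induction with
  | mem g hg => exact hg
  | one => exact ⟨0, alpha_zero⟩
  | mul g h _ _ hg hh =>
    obtain ⟨a, rfl⟩ := hg
    obtain ⟨b, rfl⟩ := hh
    exact ⟨b + a, (alpha_mul a b).symm⟩
  | inv g _ hg =>
    obtain ⟨a, rfl⟩ := hg
    exact ⟨-a, (alpha_inv a).symm⟩

theorem pval_eq {g : Equiv.Perm (Option V)} {x y : V} (h : g (some x) = some y) :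
    pval g x = y := by simp [pval, h]

theorem some_pval {g : Equiv.Perm (Option V)} {x : V} (h : g (some x) ≠ none) :
    g (some x) = some (pval g x) := by
  obtain ⟨y, hy⟩ := Option.ne_none_iff_exists'.1 h
  rw [hy, pval_eq hy]

end Translations

section SharplyTwoTransitive

variable {X : Type*} {G : Subgroup (Equiv.Perm X)}

theorem IsSharply2Trans.eq_one (hG : IsSharply2Trans G) {p q : X} (hpq : p ≠ q)
    {g : Equiv.Perm X} (hg : g ∈ G) (hp : g p = p) (hq : g q = q) : g = 1 := by
  obtain ⟨k, -, huniq⟩ := hG p q p q hpq hpq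
  exact congrArg Subtype.val ((huniq ⟨g, hg⟩ ⟨hp, hq⟩).trans (huniq 1 ⟨rfl, rfl⟩).symm)

theorem isSharply2Trans_of_stabilizer {p q : X}
    (htrans : ∀ x₁ x₂ : X, x₁ ≠ x₂ → ∃ g ∈ G, g x₁ = p ∧ g x₂ = q)
    (hstab : ∀ g ∈ G, g p = p → g q = q → g = 1) : IsSharply2Trans G := by
  intro x₁ x₂ y₁ y₂ hx hy
  obtain ⟨k, hk, hk₁, hk₂⟩ := htrans x₁ x₂ hx
  obtain ⟨l, hl, hl₁, hl₂⟩ := htrans y₁ y₂ hy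
  refine ⟨⟨l⁻¹ * k, mul_mem (inv_mem hl) hk⟩, ?_, fun ⟨g, hg⟩ ⟨hg₁, hg₂⟩ => Subtype.ext ?_⟩
  · simp only [Equiv.Perm.mul_apply, Equiv.Perm.inv_eq_iff_eq, hk₁, hk₂, hl₁, hl₂, and_self]
  · have h : l * g * k⁻¹ = 1 := hstab _ (mul_mem (mul_mem hl hg) (inv_mem hk))
      (by simp [← hk₁, hg₁, hl₁]) (by simp [← hk₂, hg₂, hl₂])
    exact eq_inv_mul_of_mul_eq (mul_inv_eq_one.1 h)

end SharplyTwoTransitive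

namespace MSData

variable {V : Type*} [AddGroup V] (M : MSData V)

theorem tau_inv_none : M.τ⁻¹ none = some 0 := by
  rw [Equiv.Perm.inv_eq_iff_eq, M.τ_zero]

theorem tau_some_ne_none {a : V} (ha : a ≠ 0) : M.τ (some a) ≠ none := by
  rw [← M.τ_zero]
  exact fun h => ha (Option.some_injective _ (M.τ.injective h))

theorem tau_inv_some_ne_none {a : V} (ha : a ≠ 0) : M.τ⁻¹ (some a) ≠ none := by
  rw [Ne, Equiv.Perm.inv_eq_iff_eq, M.τ_inf]
  exact fun h => ha (Option.some_injective _ h)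

theorem pval_tau_ne_zero {a : V} (ha : a ≠ 0) : pval M.τ a ≠ 0 := by
  intro h
  have h' := some_pval (M.tau_some_ne_none ha)
  rw [h, ← M.τ_inf] at h'
  exact Option.some_ne_none a (M.τ.injective h')

theorem pval_tau_inv_ne_zero {a : V} (ha : a ≠ 0) : pval M.τ⁻¹ a ≠ 0 := by
  intro h
  have h' := some_pval (M.tau_inv_some_ne_none ha)
  rw [h, Equiv.Perm.inv_eq_iff_eq, M.τ_zero] at h'
  exact Option.some_ne_none a h'

theorem pval_tau_tau_inv {a : V} (ha : a ≠ 0) : pval M.τ (pval M.τ⁻¹ a) = a :=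
  pval_eq (by rw [← some_pval (M.tau_inv_some_ne_none ha)]; exact M.τ.apply_symm_apply _)

theorem pval_tau_inv_tau {a : V} (ha : a ≠ 0) : pval M.τ⁻¹ (pval M.τ a) = a :=
  pval_eq (by rw [← some_pval (M.tau_some_ne_none ha)]; exact M.τ.symm_apply_apply _)

theorem hua_zero (x : V) : M.hua 0 x = 0 := if_pos rfl

theorem mu_apply_none {a : V} (ha : a ≠ 0) : M.μ a none = some 0 := by
  have hd : -pval M.τ⁻¹ a ≠ 0 := neg_ne_zero.2 (M.pval_tau_inv_ne_zero ha)
  simp only [μ, Equiv.Perm.mul_apply, alpha_none, M.tau_inv_none, alpha_some, zero_add]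
  rw [some_pval (M.tau_some_ne_none hd), alpha_some, add_neg_cancel]

theorem mu_apply_zero {a : V} (ha : a ≠ 0) : M.μ a (some 0) = none := by
  simp only [μ, Equiv.Perm.mul_apply, alpha_some, zero_add]
  rw [some_pval (M.tau_inv_some_ne_none ha), alpha_some, add_neg_cancel, M.τ_zero, alpha_none]

/-- `μ_a⁻¹ = μ_{(-aτ⁻¹)τ}`. -/
theorem exists_mu_inv_eq {a : V} (ha : a ≠ 0) : ∃ b ≠ 0, (M.μ a)⁻¹ = M.μ b := by
  have hd : -pval M.τ⁻¹ a ≠ 0 := neg_ne_zero.2 (M.pval_tau_inv_ne_zero ha)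
  refine ⟨pval M.τ (-pval M.τ⁻¹ a), M.pval_tau_ne_zero hd, ?_⟩
  simp only [μ, M.pval_tau_inv_tau hd, neg_neg, M.pval_tau_tau_inv ha, mul_inv_rev, alpha_inv,
    inv_inv]
  group

def rootElt : Option V → V → Equiv.Perm (Option V)
  | none, b => alpha b
  | some a, b => (alpha a)⁻¹ * (M.τ⁻¹ * alpha b * M.τ) * alpha a

theorem mem_Usub_iff {z : Option V} {g : Equiv.Perm (Option V)} :
    g ∈ M.Usub z ↔ ∃ b, M.rootElt z b = g := by
  cases z with
  | none => exact mem_Uinf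
  | some a =>
    simp only [Usub, rootElt, Subgroup.mem_map, MulEquiv.coe_toMonoidHom, MulAut.conj_apply,
      mem_Uinf]
    constructor
    · rintro ⟨_, ⟨_, ⟨b, rfl⟩, rfl⟩, rfl⟩
      exact ⟨b, by group⟩
    · rintro ⟨b, rfl⟩
      exact ⟨_, ⟨alpha b, ⟨b, rfl⟩, rfl⟩, by group⟩

theorem alpha_mem_littleProjGroup (a : V) : alpha a ∈ M.littleProjGroup :=
  le_iSup M.Usub none (mem_Uinf.2 ⟨a, rfl⟩)

theorem tau_mem_littleProjGroup {e : V} (hτe : M.τ = M.μ e) : M.τ ∈ M.littleProjGroup := by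
  set c := -pval M.τ (-pval M.τ⁻¹ e)
  set d := -pval M.τ⁻¹ e
  -- `τ = μ_e = α_c τ α_d τ⁻¹ α_e` rearranges to `τ⁻¹ = α_{-d} · (α_{-c})^τ · α_{-e}`
  have key : alpha (-d) * (M.τ⁻¹ * alpha (-c) * M.τ) * alpha (-e) = M.τ⁻¹ := by
    have he : M.τ = alpha c * M.τ * alpha d * M.τ⁻¹ * alpha e := hτe
    nth_rw 2 [he]
    simp only [← alpha_inv]
    group
  have hU0 : M.τ⁻¹ * alpha (-c) * M.τ ∈ M.littleProjGroup :=
    le_iSup M.Usub (some 0) (M.mem_Usub_iff.2 ⟨-c, by simp [rootElt]⟩)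
  rw [← inv_mem_iff, ← key]
  exact mul_mem (mul_mem (M.alpha_mem_littleProjGroup _) hU0) (M.alpha_mem_littleProjGroup _)

theorem mu_mem_littleProjGroup {e : V} (hτe : M.τ = M.μ e) (a : V) :
    M.μ a ∈ M.littleProjGroup := by
  have hτ := M.tau_mem_littleProjGroup hτe
  have hα := M.alpha_mem_littleProjGroup
  exact mul_mem (mul_mem (mul_mem (mul_mem (hα _) hτ) (hα _)) (inv_mem hτ)) (hα _)

theorem mu_eq_of_isSharply2Trans {e : V} (hτe : M.τ = M.μ e)
    (hG : IsSharply2Trans M.littleProjGroup) {a b : V} (ha : a ≠ 0) (hb : b ≠ 0) :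
    M.μ a = M.μ b := by
  -- `μ_b⁻¹ μ_a` fixes both `∞` and `0`
  have h := hG.eq_one (p := none) (q := some 0) (Option.some_ne_none 0).symm
    (mul_mem (inv_mem (M.mu_mem_littleProjGroup hτe b)) (M.mu_mem_littleProjGroup hτe a))
    (by rw [Equiv.Perm.mul_apply, Equiv.Perm.inv_eq_iff_eq, M.mu_apply_none ha,
      M.mu_apply_none hb])
    (by rw [Equiv.Perm.mul_apply, Equiv.Perm.inv_eq_iff_eq, M.mu_apply_zero ha,
      M.mu_apply_zero hb])
  exact (inv_mul_eq_one.1 h).symm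

theorem littleProjGroup_le_closure :
    M.littleProjGroup ≤ Subgroup.closure (Set.range alpha ∪ {M.τ}) := by
  have hα : ∀ a, alpha a ∈ Subgroup.closure (Set.range alpha ∪ {M.τ}) :=
    fun a => Subgroup.subset_closure (Or.inl ⟨a, rfl⟩)
  have hτ : M.τ ∈ Subgroup.closure (Set.range alpha ∪ {M.τ}) :=
    Subgroup.subset_closure (Or.inr rfl)
  refine iSup_le fun z g hg => ?_
  obtain ⟨b, rfl⟩ := M.mem_Usub_iff.1 hg
  cases z with
  | none => exact hα b
  | some a =>
    exact mul_mem (mul_mem (inv_mem (hα a)) (mul_mem (mul_mem (inv_mem hτ) (hα b)) hτ)) (hα a)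

def bruhatSet : Set (Equiv.Perm (Option V)) :=
  {g | (∃ x, g = alpha x) ∨ ∃ x y, g = alpha x * M.τ * alpha y}

theorem closure_subset_bruhatSet (hτinv : M.τ⁻¹ = M.τ)
    (hrel : ∀ z ≠ 0, ∃ p q, M.τ * alpha z * M.τ = alpha p * M.τ * alpha q) :
    (Subgroup.closure (Set.range alpha ∪ {M.τ}) : Set (Equiv.Perm (Option V))) ⊆
      M.bruhatSet := by
  have hτ2 : M.τ * M.τ = 1 := by nth_rw 1 [← hτinv]; exact inv_mul_cancel _
  have hinv : ∀ g ∈ Set.range alpha ∪ {M.τ}, g⁻¹ ∈ Set.range alpha ∪ {M.τ} := by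
    rintro g (⟨a, rfl⟩ | rfl)
    exacts [Or.inl ⟨-a, (alpha_inv a).symm⟩, Or.inr hτinv]
  have hmul : ∀ g ∈ Set.range alpha ∪ {M.τ}, ∀ h ∈ M.bruhatSet, g * h ∈ M.bruhatSet := by
    rintro g (⟨c, rfl⟩ | rfl) h (⟨x, rfl⟩ | ⟨x, y, rfl⟩)
    · exact Or.inl ⟨x + c, alpha_mul c x⟩
    · exact Or.inr ⟨x + c, y, by rw [← alpha_mul]; group⟩
    · exact Or.inr ⟨0, x, by rw [alpha_zero, one_mul]⟩
    · by_cases hx : x = 0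
      · exact Or.inl ⟨y, by rw [hx, alpha_zero, one_mul, ← mul_assoc, hτ2, one_mul]⟩
      · obtain ⟨p, q, hpq⟩ := hrel x hx
        refine Or.inr ⟨p, y + q, ?_⟩
        calc M.τ * (alpha x * M.τ * alpha y) = M.τ * alpha x * M.τ * alpha y := by group
          _ = alpha p * M.τ * alpha (y + q) := by rw [hpq, ← alpha_mul]; group
  intro g hg
  induction hg using Subgroup.closure_induction_left with
  | one => exact Or.inl ⟨0, alpha_zero.symm⟩
  | mul_left g hg h _ hh => exact hmul g hg h hh
  | inv_mul_cancel g hg h _ hh => exact hmul g⁻¹ (hinv g hg) h hh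

theorem tau_mul_alpha_mul_tau (hτinv : M.τ⁻¹ = M.τ) (hτμ : ∀ a ≠ 0, M.τ = M.μ a) {z : V}
    (hz : z ≠ 0) : ∃ p q, M.τ * alpha z * M.τ = alpha p * M.τ * alpha q := by
  set b := pval M.τ (-z)
  have hnz : -z ≠ 0 := neg_ne_zero.2 hz
  -- `τ = μ_b` with `-(bτ⁻¹) = z`
  have hb : M.τ = alpha (-pval M.τ z) * M.τ * alpha z * M.τ * alpha b := by
    have h := hτμ b (M.pval_tau_ne_zero hnz)
    rwa [μ, M.pval_tau_inv_tau hnz, neg_neg, hτinv] at h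
  refine ⟨pval M.τ z, -b, ?_⟩
  generalize pval M.τ z = p at hb ⊢
  conv_rhs => rw [hb]
  simp only [← alpha_inv]
  group

theorem exists_mem_littleProjGroup_apply_eq (hτ : M.τ ∈ M.littleProjGroup) {x₁ x₂ : Option V}
    (h : x₁ ≠ x₂) : ∃ g ∈ M.littleProjGroup, g x₁ = none ∧ g x₂ = some 0 := by
  obtain ⟨k, hk, hk₁⟩ : ∃ k ∈ M.littleProjGroup, k x₁ = none := by
    cases x₁ with
    | none => exact ⟨1, one_mem _, rfl⟩
    | some v =>
      exact ⟨M.τ * alpha (-v), mul_mem hτ (M.alpha_mem_littleProjGroup _), by simp [M.τ_zero]⟩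
  obtain ⟨u, hu⟩ := Option.ne_none_iff_exists'.1 fun h₂ => h (k.injective (hk₁.trans h₂.symm))
  exact ⟨alpha (-u) * k, mul_mem (M.alpha_mem_littleProjGroup _) hk, by simp [hk₁], by simp [hu]⟩

theorem isSharply2Trans_of_mu_eq {e : V} (he : e ≠ 0) (hτe : M.τ = M.μ e)
    (hμ : ∀ a ≠ 0, ∀ b ≠ 0, M.μ a = M.μ b) : IsSharply2Trans M.littleProjGroup := by
  have hτμ : ∀ a ≠ 0, M.τ = M.μ a := fun a ha => hτe.trans (hμ e he a ha)
  have hτinv : M.τ⁻¹ = M.τ := by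
    obtain ⟨b, hb, hinv⟩ := M.exists_mu_inv_eq he
    rw [hτe, hinv, ← hτμ b hb, hτe]
  have hbruhat : ∀ g ∈ M.littleProjGroup, g ∈ M.bruhatSet := fun g hg =>
    M.closure_subset_bruhatSet hτinv (fun _ => M.tau_mul_alpha_mul_tau hτinv hτμ)
      (M.littleProjGroup_le_closure hg)
  refine isSharply2Trans_of_stabilizer (p := none) (q := some 0) ?_ ?_
  · exact fun _ _ => M.exists_mem_littleProjGroup_apply_eq (M.tau_mem_littleProjGroup hτe)
  · intro g hg hinf hzero
    rcases hbruhat g hg with ⟨x, rfl⟩ | ⟨x, y, rfl⟩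
    · rw [show x = 0 by simpa using hzero, alpha_zero]
    · simp [M.τ_inf] at hinf

theorem isSharply2Trans_iff_mu_eq {e : V} (he : e ≠ 0) (hτe : M.τ = M.μ e) :
    IsSharply2Trans M.littleProjGroup ↔ ∀ a ≠ 0, ∀ b ≠ 0, M.μ a = M.μ b :=
  ⟨fun hG _ ha _ hb => M.mu_eq_of_isSharply2Trans hτe hG ha hb, M.isSharply2Trans_of_mu_eq he hτe⟩

end MSData

theorem exists_forall_and_eventually {ι : Type*} {β : ι → Type*} {l : Filter ι}
    {Q P : ∀ i, β i → Prop} (hQ : ∀ i, ∃ x, Q i x) (hP : ∀ᶠ i in l, ∃ x, Q i x ∧ P i x) :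
    ∃ f : ∀ i, β i, (∀ i, Q i (f i)) ∧ ∀ᶠ i in l, P i (f i) := by
  classical
  choose f₀ hf₀ using hQ
  refine ⟨fun i => if h : ∃ x, Q i x ∧ P i x then h.choose else f₀ i, fun i => ?_,
    hP.mono fun i h => ?_⟩
  · dsimp only
    split_ifs with h
    exacts [h.choose_spec.1, hf₀ i]
  · simp only [dif_pos h]
    exact h.choose_spec.2

section Ultraproduct

variable {S : Type*} (F : Ultrafilter S) (Us : S → Type*) [∀ s, AddGroup (Us s)]

abbrev Ultraproduct := (∀ s, Us s) ⧸ eventuallyZero F Us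

variable {F Us}

theorem Ultraproduct.mk_eq_mk_iff {u v : ∀ s, Us s} :
    (u : Ultraproduct F Us) = v ↔ ∀ᶠ s in F, u s = v s := by
  rw [QuotientAddGroup.eq]
  exact Filter.eventually_congr (.of_forall fun s => neg_add_eq_zero)

theorem Ultraproduct.mk_eq_zero_iff {u : ∀ s, Us s} :
    (u : Ultraproduct F Us) = 0 ↔ ∀ᶠ s in F, u s = 0 :=
  Ultraproduct.mk_eq_mk_iff (v := 0)

theorem Ultraproduct.mk_ne_zero {a : ∀ s, Us s} (ha : ∀ s, a s ≠ 0) :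
    (a : Ultraproduct F Us) ≠ 0 := fun h =>
  let ⟨s, hs⟩ := (Ultraproduct.mk_eq_zero_iff.1 h).exists
  ha s hs

theorem Ultraproduct.exists_mk_eq_of_ne_zero [∀ s, Nontrivial (Us s)] {q : Ultraproduct F Us}
    (hq : q ≠ 0) : ∃ a : ∀ s, Us s, (∀ s, a s ≠ 0) ∧ (a : Ultraproduct F Us) = q := by
  obtain ⟨u, rfl⟩ := QuotientAddGroup.mk_surjective q
  have hu : ∀ᶠ s in F, u s ≠ 0 :=
    Ultrafilter.eventually_not.2 fun h => hq (Ultraproduct.mk_eq_zero_iff.2 h)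
  obtain ⟨a, ha, hau⟩ := exists_forall_and_eventually (P := fun s x => x = u s)
    (fun s => exists_ne 0) (hu.mono fun s hs => ⟨u s, hs, rfl⟩)
  exact ⟨a, ha, Ultraproduct.mk_eq_mk_iff.2 hau⟩

/-- Łoś's theorem for a formula `∀ x ≠ 0, P x`. -/
theorem Ultraproduct.forall_ne_zero_iff [∀ s, Nontrivial (Us s)] {P : ∀ s, Us s → Prop}
    {P' : Ultraproduct F Us → Prop}
    (hP : ∀ a : ∀ s, Us s, (∀ s, a s ≠ 0) → (P' a ↔ ∀ᶠ s in F, P s (a s))) :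
    (∀ q : Ultraproduct F Us, q ≠ 0 → P' q) ↔ ∀ᶠ s in F, ∀ x, x ≠ 0 → P s x := by
  refine ⟨fun h => ?_, fun h q hq => ?_⟩
  · by_contra hnot
    have hex : ∀ᶠ s in F, ∃ x, x ≠ 0 ∧ ¬ P s x :=
      (Ultrafilter.eventually_not.2 hnot).mono fun s hs => by simpa using hs
    obtain ⟨a, ha, hna⟩ := exists_forall_and_eventually (fun s => exists_ne 0) hex
    obtain ⟨s, hs, hns⟩ := ((hP a ha).1 (h _ (Ultraproduct.mk_ne_zero ha))).and hna |>.exists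
    exact hns hs
  · obtain ⟨a, ha, rfl⟩ := Ultraproduct.exists_mk_eq_of_ne_zero hq
    exact (hP a ha).2 (h.mono fun s hs => hs _ (ha s))

variable (F) in
open Classical in
noncomputable def mkPoint (z : ∀ s, Option (Us s)) : Option (Ultraproduct F Us) :=
  if ∀ᶠ s in F, z s = none then none else some (QuotientAddGroup.mk fun s => (z s).getD 0)

theorem mkPoint_none : mkPoint F (fun _ => none : ∀ s, Option (Us s)) = none :=
  if_pos (.of_forall fun _ => rfl)

theorem mkPoint_some (x : ∀ s, Us s) :
    mkPoint F (fun s => some (x s)) = some (x : Ultraproduct F Us) :=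
  if_neg fun h => by simpa using h.exists

theorem mkPoint_eq_iff {z z' : ∀ s, Option (Us s)} :
    mkPoint F z = mkPoint F z' ↔ ∀ᶠ s in F, z s = z' s := by
  refine ⟨fun h => ?_, fun h => ?_⟩
  · by_cases hz : ∀ᶠ s in F, z s = none <;> by_cases hz' : ∀ᶠ s in F, z' s = none <;>
      simp only [mkPoint, hz, hz', if_true, if_false, reduceCtorEq, Option.some_inj,
        Ultraproduct.mk_eq_mk_iff] at h
    · filter_upwards [hz, hz'] with s hs hs' using hs.trans hs'.symm
    · filter_upwards [h, Ultrafilter.eventually_not.2 hz, Ultrafilter.eventually_not.2 hz']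
        with s hs h₁ h₂
      obtain ⟨x, hx⟩ := Option.ne_none_iff_exists'.1 h₁
      obtain ⟨y, hy⟩ := Option.ne_none_iff_exists'.1 h₂
      simp_all
  · have hnone : (∀ᶠ s in F, z s = none) ↔ ∀ᶠ s in F, z' s = none :=
      Filter.eventually_congr (h.mono fun s hs => by rw [hs])
    have hget : (QuotientAddGroup.mk fun s => (z s).getD 0 : Ultraproduct F Us) =
        QuotientAddGroup.mk fun s => (z' s).getD 0 :=
      Ultraproduct.mk_eq_mk_iff.2 (h.mono fun s hs => by rw [hs])
    unfold mkPoint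
    by_cases hz : ∀ᶠ s in F, z s = none
    · rw [if_pos hz, if_pos (hnone.1 hz)]
    · rw [if_neg hz, if_neg (mt hnone.2 hz), hget]

theorem mkPoint_surjective : Function.Surjective (mkPoint F (Us := Us)) := by
  rintro (_ | q)
  · exact ⟨_, mkPoint_none⟩
  · obtain ⟨x, rfl⟩ := QuotientAddGroup.mk_surjective q
    exact ⟨_, mkPoint_some x⟩

theorem getD_mkPoint (z : ∀ s, Option (Us s)) :
    (mkPoint F z).getD 0 = (QuotientAddGroup.mk fun s => (z s).getD 0 : Ultraproduct F Us) := by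
  by_cases hz : ∀ᶠ s in F, z s = none
  · rw [mkPoint, if_pos hz, Option.getD_none, eq_comm, Ultraproduct.mk_eq_zero_iff]
    filter_upwards [hz] with s hs
    rw [hs, Option.getD_none]
  · rw [mkPoint, if_neg hz, Option.getD_some]

theorem map_mkPoint {f : ∀ s, Us s → Us s} {f' : Ultraproduct F Us → Ultraproduct F Us}
    (hf : ∀ x : ∀ s, Us s, f' x = QuotientAddGroup.mk fun s => f s (x s))
    (z : ∀ s, Option (Us s)) :
    (mkPoint F z).map f' = mkPoint F fun s => (z s).map (f s) := by
  have hnone : (∀ᶠ s in F, (z s).map (f s) = none) ↔ ∀ᶠ s in F, z s = none := by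
    simp only [Option.map_eq_none_iff]
  unfold mkPoint
  by_cases hz : ∀ᶠ s in F, z s = none
  · rw [if_pos hz, if_pos (hnone.2 hz), Option.map_none]
  · rw [if_neg hz, if_neg (mt hnone.1 hz), Option.map_some, hf, Option.some_inj,
      Ultraproduct.mk_eq_mk_iff]
    filter_upwards [Ultrafilter.eventually_not.2 hz] with s hs
    obtain ⟨x, hx⟩ := Option.ne_none_iff_exists'.1 hs
    rw [hx, Option.getD_some, Option.map_some, Option.getD_some]

variable (F) in
noncomputable def permMkFun (g : ∀ s, Equiv.Perm (Option (Us s))) (w : Option (Ultraproduct F Us)) :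
    Option (Ultraproduct F Us) :=
  mkPoint F fun s => g s (Function.surjInv mkPoint_surjective w s)

theorem permMkFun_mkPoint (g : ∀ s, Equiv.Perm (Option (Us s))) (z : ∀ s, Option (Us s)) :
    permMkFun F g (mkPoint F z) = mkPoint F fun s => g s (z s) := by
  refine mkPoint_eq_iff.2 ?_
  filter_upwards [mkPoint_eq_iff.1 (Function.surjInv_eq mkPoint_surjective (mkPoint F z))]
    with s hs
  rw [hs]

variable (F Us) in
noncomputable def permMk :
    (∀ s, Equiv.Perm (Option (Us s))) →* Equiv.Perm (Option (Ultraproduct F Us)) where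
  toFun g :=
    { toFun := permMkFun F g
      invFun := permMkFun F g⁻¹
      left_inv := fun w => by
        obtain ⟨z, rfl⟩ := mkPoint_surjective w
        simp [permMkFun_mkPoint]
      right_inv := fun w => by
        obtain ⟨z, rfl⟩ := mkPoint_surjective w
        simp [permMkFun_mkPoint] }
  map_one' := Equiv.ext fun w => by
    obtain ⟨z, rfl⟩ := mkPoint_surjective w
    simp [permMkFun_mkPoint]
  map_mul' g h := Equiv.ext fun w => by
    obtain ⟨z, rfl⟩ := mkPoint_surjective w
    simp [permMkFun_mkPoint]

theorem permMk_mkPoint (g : ∀ s, Equiv.Perm (Option (Us s))) (z : ∀ s, Option (Us s)) :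
    permMk F Us g (mkPoint F z) = mkPoint F fun s => g s (z s) :=
  permMkFun_mkPoint g z

theorem permMk_eq_iff {g g' : ∀ s, Equiv.Perm (Option (Us s))} :
    permMk F Us g = permMk F Us g' ↔ ∀ᶠ s in F, g s = g' s := by
  refine ⟨fun h => ?_, fun h => Equiv.ext fun w => ?_⟩
  · by_contra hne
    have hex : ∀ᶠ s in F, ∃ z, True ∧ g s z ≠ g' s z :=
      (Ultrafilter.eventually_not.2 hne).mono fun s hs =>
        let ⟨z, hz⟩ := not_forall.1 (mt Equiv.ext hs)
        ⟨z, trivial, hz⟩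
    obtain ⟨z, -, hz⟩ := exists_forall_and_eventually (fun _ => ⟨none, trivial⟩) hex
    have hpt := congrArg (· (mkPoint F z)) h
    simp only [permMk_mkPoint, mkPoint_eq_iff] at hpt
    obtain ⟨s, hs, hns⟩ := (hpt.and hz).exists
    exact hns hs
  · obtain ⟨z, rfl⟩ := mkPoint_surjective w
    simp only [permMk_mkPoint]
    exact mkPoint_eq_iff.2 (h.mono fun s hs => by rw [hs])

theorem permMk_alpha (a : ∀ s, Us s) :
    permMk F Us (fun s => alpha (a s)) = alpha (a : Ultraproduct F Us) := Equiv.ext fun w => by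
  obtain ⟨z, rfl⟩ := mkPoint_surjective w
  rw [permMk_mkPoint]
  exact (map_mkPoint (f := fun s u => u + a s) (f' := (· + (a : Ultraproduct F Us)))
    (fun x => (QuotientAddGroup.mk_add _ x a).symm) z).symm

theorem pval_permMk (g : ∀ s, Equiv.Perm (Option (Us s))) (x : ∀ s, Us s) :
    pval (permMk F Us g) x =
      (QuotientAddGroup.mk fun s => pval (g s) (x s) : Ultraproduct F Us) := by
  rw [pval, ← mkPoint_some, permMk_mkPoint, getD_mkPoint]
  rfl

end Ultraproduct

theorem pi_map_conj {ι : Type*} {G : ι → Type*} [∀ i, Group (G i)]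
    (H : ∀ i, Subgroup (G i)) (c : ∀ i, G i) :
    (Subgroup.pi Set.univ H).map (MulAut.conj c).toMonoidHom =
      Subgroup.pi Set.univ fun i => (H i).map (MulAut.conj (c i)).toMonoidHom := by
  ext g
  simp only [Subgroup.mem_map_equiv, Subgroup.mem_pi, Set.mem_univ, true_implies,
    MulAut.conj_symm_apply, Pi.mul_apply, Pi.inv_apply]

namespace MSData

variable {S : Type*} (F : Ultrafilter S) {Us : S → Type*} [∀ s, AddGroup (Us s)]
  (Ms : ∀ s, MSData (Us s))

noncomputable def ultraproduct : MSData (Ultraproduct F Us) where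
  τ := permMk F Us fun s => (Ms s).τ
  τ_zero := by
    rw [← QuotientAddGroup.mk_zero, ← mkPoint_some, permMk_mkPoint]
    simp only [Pi.zero_apply, MSData.τ_zero, mkPoint_none]
  τ_inf := by
    rw [← mkPoint_none, permMk_mkPoint]
    simp only [MSData.τ_inf]
    exact mkPoint_some 0

theorem ultraproduct_tau : (ultraproduct F Ms).τ = permMk F Us fun s => (Ms s).τ := rfl

theorem ultraproduct_tau_some (a : ∀ s, Us s) (ha : ∀ s, a s ≠ 0) :
    (ultraproduct F Ms).τ (some a) =
      some (QuotientAddGroup.mk fun s => pval (Ms s).τ (a s) : Ultraproduct F Us) := by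
  rw [ultraproduct_tau, ← mkPoint_some, permMk_mkPoint, ← mkPoint_some]
  simp only [some_pval ((Ms _).tau_some_ne_none (ha _))]

theorem ultraproduct_mu (a : ∀ s, Us s) :
    (ultraproduct F Ms).μ a = permMk F Us fun s => (Ms s).μ (a s) := by
  simp only [μ, ultraproduct_tau, ← map_inv, pval_permMk, ← QuotientAddGroup.mk_neg,
    ← permMk_alpha, ← map_mul]
  rfl

theorem ultraproduct_hua (a x : ∀ s, Us s) :
    (ultraproduct F Ms).hua a x =
      (QuotientAddGroup.mk fun s => (Ms s).hua (a s) (x s) : Ultraproduct F Us) := by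
  by_cases ha : (a : Ultraproduct F Us) = 0
  · rw [ha, hua_zero, eq_comm, Ultraproduct.mk_eq_zero_iff]
    filter_upwards [Ultraproduct.mk_eq_zero_iff.1 ha] with s hs
    rw [hs, hua_zero]
  · rw [hua, if_neg ha, ultraproduct_mu, ultraproduct_tau, ← map_mul, pval_permMk,
      Ultraproduct.mk_eq_mk_iff]
    filter_upwards [Ultrafilter.eventually_not.2 (mt Ultraproduct.mk_eq_zero_iff.2 ha)]
      with s hs
    rw [hua, if_neg hs, Pi.mul_apply]

theorem ultraproduct_rootElt (zs : ∀ s, Option (Us s)) (b : ∀ s, Us s) :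
    permMk F Us (fun s => (Ms s).rootElt (zs s) (b s)) =
      (ultraproduct F Ms).rootElt (mkPoint F zs) b := by
  by_cases hz : ∀ᶠ s in F, zs s = none
  · rw [mkPoint, if_pos hz, rootElt, ← permMk_alpha, permMk_eq_iff]
    filter_upwards [hz] with s hs
    rw [hs, rootElt]
  · set a : ∀ s, Us s := fun s => (zs s).getD 0
    have ha : ∀ᶠ s in F, zs s = some (a s) :=
      (Ultrafilter.eventually_not.2 hz).mono fun s hs => by
        obtain ⟨x, hx⟩ := Option.ne_none_iff_exists'.1 hs
        simp [a, hx]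
    rw [mkPoint, if_neg hz, rootElt, ultraproduct_tau, ← permMk_alpha, ← permMk_alpha,
      ← map_inv, ← map_inv, ← map_mul, ← map_mul, ← map_mul, ← map_mul, permMk_eq_iff]
    filter_upwards [ha] with s hs
    rw [hs, rootElt]
    rfl

theorem ultraproduct_Usub (zs : ∀ s, Option (Us s)) :
    (ultraproduct F Ms).Usub (mkPoint F zs) =
      (Subgroup.pi Set.univ fun s => (Ms s).Usub (zs s)).map (permMk F Us) := by
  ext g
  simp only [mem_Usub_iff, Subgroup.mem_map, Subgroup.mem_pi, Set.mem_univ, true_implies]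
  constructor
  · rintro ⟨b, rfl⟩
    obtain ⟨b, rfl⟩ := QuotientAddGroup.mk_surjective b
    exact ⟨_, fun s => ⟨b s, rfl⟩, ultraproduct_rootElt F Ms zs b⟩
  · rintro ⟨gs, hgs, rfl⟩
    choose b hb using hgs
    exact ⟨b, by rw [← ultraproduct_rootElt, funext hb]⟩

theorem conj_permMk_comp (h : ∀ s, Equiv.Perm (Option (Us s))) :
    (MulAut.conj (permMk F Us h)).toMonoidHom.comp (permMk F Us) =
      (permMk F Us).comp (MulAut.conj h).toMonoidHom :=
  MonoidHom.ext fun k => by simp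

theorem isMoufangSet_ultraproduct (hMS : ∀ s, (Ms s).IsMoufangSet) :
    (ultraproduct F Ms).IsMoufangSet := by
  intro y g hg x
  obtain ⟨ys, rfl⟩ := mkPoint_surjective y
  obtain ⟨xs, rfl⟩ := mkPoint_surjective x
  rw [ultraproduct_Usub] at hg
  obtain ⟨gs, hgs, rfl⟩ := Subgroup.mem_map.1 hg
  rw [permMk_mkPoint, ultraproduct_Usub, ultraproduct_Usub, Subgroup.map_map, ← map_inv,
    conj_permMk_comp, ← Subgroup.map_map, pi_map_conj]
  congr 2
  funext s
  exact hMS s (ys s) (gs s) (hgs s trivial) (xs s)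

theorem isSpecial_ultraproduct_iff [∀ s, Nontrivial (Us s)] :
    (ultraproduct F Ms).IsSpecial ↔ ∀ᶠ s in F, (Ms s).IsSpecial := by
  refine Ultraproduct.forall_ne_zero_iff fun a _ => ?_
  rw [← QuotientAddGroup.mk_neg, ultraproduct_tau, ← mkPoint_some, ← mkPoint_some,
    permMk_mkPoint, permMk_mkPoint,
    map_mkPoint (f := fun s u => -u) (fun x => (QuotientAddGroup.mk_neg _ x).symm),
    mkPoint_eq_iff]
  rfl

theorem isProper_ultraproduct_iff [∀ s, Nontrivial (Us s)] {es : ∀ s, Us s}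
    (hes : ∀ s, es s ≠ 0) (hτs : ∀ s, (Ms s).τ = (Ms s).μ (es s)) :
    (ultraproduct F Ms).IsProper ↔ ∀ᶠ s in F, (Ms s).IsProper := by
  have hτ : (ultraproduct F Ms).τ = (ultraproduct F Ms).μ es := by
    rw [ultraproduct_mu, ultraproduct_tau, funext hτs]
  rw [IsProper, isSharply2Trans_iff_mu_eq _ (Ultraproduct.mk_ne_zero hes) hτ]
  simp only [IsProper, isSharply2Trans_iff_mu_eq _ (hes _) (hτs _), Ultrafilter.eventually_not]
  refine not_congr (Ultraproduct.forall_ne_zero_iff fun a _ => ?_)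
  refine Ultraproduct.forall_ne_zero_iff fun b _ => ?_
  rw [ultraproduct_mu, ultraproduct_mu, permMk_eq_iff]

theorem HuaSubgroup_ultraproduct_le [∀ s, Nontrivial (Us s)] :
    (ultraproduct F Ms).HuaSubgroup ≤
      (Subgroup.pi Set.univ fun s => (Ms s).HuaSubgroup).map (permMk F Us) := by
  refine (Subgroup.closure_le _).2 ?_
  rintro _ ⟨p, q, hp, hq, rfl⟩
  obtain ⟨a, ha, rfl⟩ := Ultraproduct.exists_mk_eq_of_ne_zero hp
  obtain ⟨b, hb, rfl⟩ := Ultraproduct.exists_mk_eq_of_ne_zero hq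
  refine ⟨fun s => (Ms s).μ (b s) * (Ms s).μ (a s),
    fun s _ => Subgroup.subset_closure ⟨a s, b s, ha s, hb s, rfl⟩, ?_⟩
  rw [ultraproduct_mu, ultraproduct_mu, ← map_mul]
  rfl

end MSData

section Centroid

variable {S : Type*} (F : Ultrafilter S) {Us : S → Type*} [∀ s, AddGroup (Us s)]

noncomputable def endMk (T : ∀ s, Us s →+ Us s) : Ultraproduct F Us →+ Ultraproduct F Us :=
  QuotientAddGroup.map _ _ (AddMonoidHom.piMap T) fun x hx =>
    Filter.mem_of_superset hx fun s (hs : x s = 0) => show T s (x s) = 0 by rw [hs, map_zero]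

theorem endMk_mk (T : ∀ s, Us s →+ Us s) (x : ∀ s, Us s) :
    endMk F T x = (QuotientAddGroup.mk fun s => T s (x s) : Ultraproduct F Us) := rfl

theorem MSData.inCentroid_endMk [∀ s, Nontrivial (Us s)] (Ms : ∀ s, MSData (Us s))
    (T : ∀ s, Us s →+ Us s) (hT : ∀ s, (Ms s).InCentroid (T s)) :
    (MSData.ultraproduct F Ms).InCentroid (endMk F T) := by
  refine ⟨fun g hg q => ?_, fun q y => ?_⟩
  · obtain ⟨gs, hgs, rfl⟩ := MSData.HuaSubgroup_ultraproduct_le F Ms hg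
    obtain ⟨x, rfl⟩ := QuotientAddGroup.mk_surjective q
    rw [pval_permMk, endMk_mk, endMk_mk, pval_permMk]
    exact congrArg _ (funext fun s => (hT s).1 _ (hgs s trivial) (x s))
  · obtain ⟨a, rfl⟩ := QuotientAddGroup.mk_surjective q
    obtain ⟨x, rfl⟩ := QuotientAddGroup.mk_surjective y
    rw [endMk_mk, MSData.ultraproduct_hua, MSData.ultraproduct_hua, endMk_mk, endMk_mk]
    exact congrArg _ (funext fun s => (hT s).2 (a s) (x s))

end Centroid

theorem statement_7_general {S : Type*} (F : Ultrafilter S)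
    (Us : S → Type*) [∀ s, AddGroup (Us s)]
    (Ms : ∀ s, MSData (Us s)) (es : ∀ s, Us s) (hes : ∀ s, es s ≠ 0)
    (hτs : ∀ s, (Ms s).τ = (Ms s).μ (es s))
    (hMS : ∀ s, (Ms s).IsMoufangSet) :
    ∃ Mhat : MSData ((∀ s, Us s) ⧸ eventuallyZero F Us),
      -- τ is well defined by [(a_s)]τ := [(a_sτ_s)]
      (∀ a : ∀ s, Us s, (∀ s, a s ≠ 0) →
        Mhat.τ (some (QuotientAddGroup.mk a)) =
          some (QuotientAddGroup.mk (s := eventuallyZero F Us)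
            (fun s => pval (Ms s).τ (a s)))) ∧
      -- (1) the Hua maps are computed componentwise ...
      (∀ x a : ∀ s, Us s, (∀ s, a s ≠ 0) →
        Mhat.hua (QuotientAddGroup.mk a) (QuotientAddGroup.mk x) =
          QuotientAddGroup.mk (s := eventuallyZero F Us)
            (fun s => (Ms s).hua (a s) (x s))) ∧
      -- ... in particular 𝕄(U,τ) is a Moufang set
      Mhat.IsMoufangSet ∧
      -- (2) properness
      (Mhat.IsProper ↔ {s | (Ms s).IsProper} ∈ F) ∧
      -- (3) specialness
      (Mhat.IsSpecial ↔ {s | (Ms s).IsSpecial} ∈ F) ∧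
      -- (4) centroids
      ((∀ s, (Ms s).IsSpecial) →
        ∀ T : ∀ s, Us s →+ Us s, (∀ s, (Ms s).InCentroid (T s)) →
          ∃ That : ((∀ s, Us s) ⧸ eventuallyZero F Us) →+
              ((∀ s, Us s) ⧸ eventuallyZero F Us),
            (∀ x : ∀ s, Us s, That (QuotientAddGroup.mk x) =
                QuotientAddGroup.mk (s := eventuallyZero F Us) (fun s => T s (x s))) ∧
            Mhat.InCentroid That) := by
  have : ∀ s, Nontrivial (Us s) := fun s => ⟨⟨es s, 0, hes s⟩⟩
  refine ⟨MSData.ultraproduct F Ms, fun a ha => MSData.ultraproduct_tau_some F Ms a ha,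
    fun x a _ => MSData.ultraproduct_hua F Ms a x, MSData.isMoufangSet_ultraproduct F Ms hMS,
    MSData.isProper_ultraproduct_iff F Ms hes hτs, MSData.isSpecial_ultraproduct_iff F Ms,
    fun _ T hT => ⟨endMk F T, endMk_mk F T, MSData.inCentroid_endMk F Ms T hT⟩⟩

/-- ultraproducts of Moufang sets.  Given Moufang sets `𝕄(U_s,τ_s)` with
`τ_s = μ_{e_s}`, there is an induced structure `𝕄(U,τ)` on the ultraproduct
`U = ∏ U_s/𝓕` with `[(a_s)]τ = [(a_sτ_s)]` for representatives with all entries nonzero;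
its Hua maps are computed componentwise, it is a Moufang set, it is proper (resp. special)
iff the set of `s` where `𝕄(U_s,τ_s)` is proper (resp. special) belongs to `𝓕`, and the
endomorphism induced by a family of centroid elements lies in the centroid. -/
theorem statement_7 {S : Type*} [Nonempty S] (F : Ultrafilter S)
    (Us : S → Type*) [∀ s, AddGroup (Us s)]
    (Ms : ∀ s, MSData (Us s)) (es : ∀ s, Us s) (hes : ∀ s, es s ≠ 0)
    (hτs : ∀ s, (Ms s).τ = (Ms s).μ (es s))
    (hMS : ∀ s, (Ms s).IsMoufangSet) :
    ∃ Mhat : MSData ((∀ s, Us s) ⧸ eventuallyZero F Us),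
      -- τ is well defined by [(a_s)]τ := [(a_sτ_s)]
      (∀ a : ∀ s, Us s, (∀ s, a s ≠ 0) →
        Mhat.τ (some (QuotientAddGroup.mk a)) =
          some (QuotientAddGroup.mk (s := eventuallyZero F Us)
            (fun s => pval (Ms s).τ (a s)))) ∧
      -- (1) the Hua maps are computed componentwise ...
      (∀ x a : ∀ s, Us s, (∀ s, a s ≠ 0) →
        Mhat.hua (QuotientAddGroup.mk a) (QuotientAddGroup.mk x) =
          QuotientAddGroup.mk (s := eventuallyZero F Us)
            (fun s => (Ms s).hua (a s) (x s))) ∧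
      -- ... in particular 𝕄(U,τ) is a Moufang set
      Mhat.IsMoufangSet ∧
      -- (2) properness
      (Mhat.IsProper ↔ {s | (Ms s).IsProper} ∈ F) ∧
      -- (3) specialness
      (Mhat.IsSpecial ↔ {s | (Ms s).IsSpecial} ∈ F) ∧
      -- (4) centroids
      ((∀ s, (Ms s).IsSpecial) →
        ∀ T : ∀ s, Us s →+ Us s, (∀ s, (Ms s).InCentroid (T s)) →
          ∃ That : ((∀ s, Us s) ⧸ eventuallyZero F Us) →+
              ((∀ s, Us s) ⧸ eventuallyZero F Us),
            (∀ x : ∀ s, Us s, That (QuotientAddGroup.mk x) =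
                QuotientAddGroup.mk (s := eventuallyZero F Us) (fun s => T s (x s))) ∧
            Mhat.InCentroid That) :=
  statement_7_general F Us Ms es hes hτs hMS

end MoufangPaper
end

section
/- Let 𝕜̃ be a field with a valuation v : 𝕜̃ → ℝ ∪ {∞} (v(a) = ∞ iff a = 0, v(ab) = v(a)+v(b), v(a+b) ≥ min{v(a),v(b)}), let 𝒪 := {x ∈ 𝕜̃ : v(x) ≥ 0} be its valuation ring, and let 𝕜 be a subfield of 𝕜̃ contained in 𝒪. Let V be a vector space over 𝕜̃ and Λ an 𝒪-submodule of V. Suppose v_1, …, v_n ∈ V and λ_1, …, λ_n ∈ 𝕜 are such that the λ_i are pairwise distinct and ∑_{j=1}^{n} λ_i^{j−1}·v_j ∈ Λ for each 1 ≤ i ≤ n. Then v_1, …, v_n ∈ Λ. -/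
/-!
The Vandermonde matrix of the distinct nodes `λ_i` is invertible over the subfield `𝕜` itself, so
each `v_j` is a combination of the given sums with coefficients in `𝕜 ⊆ 𝒪`, and `Λ` is closed
under such combinations.
-/

theorem Matrix.sum_smul_sum_eq_of_mul_eq_one {R M ι : Type*} [CommSemiring R] [AddCommMonoid M]
    [Module R M] [Fintype ι] [DecidableEq ι] {A B : Matrix ι ι R} (h : B * A = 1) (w : ι → M)
    (m : ι) : ∑ i, B m i • ∑ j, A i j • w j = w m := by
  simp_rw [Finset.smul_sum, smul_smul]
  rw [Finset.sum_comm]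
  simp_rw [← Finset.sum_smul, ← Matrix.mul_apply, h, Matrix.one_apply, ite_smul, one_smul,
    zero_smul]
  simp

theorem statement_8_general {K : Type*} [Field K] {V : Type*} [AddCommGroup V] [Module K V]
    (v : K → WithTop ℝ)
    (k : Subfield K) (hk : ∀ c ∈ k, 0 ≤ v c)
    (Λ : Set V) (hΛ0 : (0 : V) ∈ Λ)
    (hΛadd : ∀ a ∈ Λ, ∀ b ∈ Λ, a + b ∈ Λ)
    (hΛsmul : ∀ c : K, 0 ≤ v c → ∀ w ∈ Λ, c • w ∈ Λ)
    (n : ℕ) (vs : Fin n → V) (lam : Fin n → K)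
    (hmem : ∀ i, lam i ∈ k) (hinj : Function.Injective lam)
    (hsum : ∀ i, (∑ j : Fin n, lam i ^ (j.val) • vs j) ∈ Λ) :
    ∀ j, vs j ∈ Λ := by
  intro m
  set l : Fin n → k := fun i => ⟨lam i, hmem i⟩
  have hl : Function.Injective l := fun a b h => hinj (congrArg Subtype.val h)
  set A := Matrix.vandermonde l
  have hinv : A⁻¹ * A = 1 :=
    Matrix.nonsing_inv_mul _ (Matrix.det_vandermonde_ne_zero_iff.2 hl).isUnit
  let L : AddSubmonoid V :=
    { carrier := Λ, add_mem' := fun ha hb => hΛadd _ ha _ hb, zero_mem' := hΛ0 }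
  rw [← Matrix.sum_smul_sum_eq_of_mul_eq_one hinv vs m]
  refine L.sum_mem fun i _ => ?_
  change _ ∈ Λ
  simpa [A, l, Matrix.vandermonde_apply, Subfield.smul_def] using
    hΛsmul _ (hk _ (A⁻¹ m i).2) _ (hsum i)

/-- Lemma `Vandermonde`.  Let `𝕜̃` be a field with a valuation `v`,
`𝒪 = {x : v x ≥ 0}` its valuation ring, `𝕜` a subfield contained in `𝒪`, `V` a
`𝕜̃`-vector space and `Λ ⊆ V` an `𝒪`-submodule.  If `λ_1, …, λ_n ∈ 𝕜` are pairwise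
distinct and `∑_j λ_i^{j-1} • v_j ∈ Λ` for all `i`, then all `v_j ∈ Λ`. -/
theorem statement_8 {K : Type*} [Field K] {V : Type*} [AddCommGroup V] [Module K V]
    (v : K → WithTop ℝ)
    (hv0 : ∀ a, v a = ⊤ ↔ a = 0)
    (hvmul : ∀ a b, v (a * b) = v a + v b)
    (hvadd : ∀ a b, min (v a) (v b) ≤ v (a + b))
    (k : Subfield K) (hk : ∀ c ∈ k, 0 ≤ v c)
    (Λ : Set V) (hΛ0 : (0 : V) ∈ Λ)
    (hΛadd : ∀ a ∈ Λ, ∀ b ∈ Λ, a + b ∈ Λ)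
    (hΛsmul : ∀ c : K, 0 ≤ v c → ∀ w ∈ Λ, c • w ∈ Λ)
    (n : ℕ) (vs : Fin n → V) (lam : Fin n → K)
    (hmem : ∀ i, lam i ∈ k) (hinj : Function.Injective lam)
    (hsum : ∀ i, (∑ j : Fin n, lam i ^ (j.val) • vs j) ∈ Λ) :
    ∀ j, vs j ∈ Λ :=
  statement_8_general v k hk Λ hΛ0 hΛadd hΛsmul n vs lam hmem hinj hsum
end

section
/- Let G be a 2-sharp permutation group on a set X (i.e. any element of G fixing two distinct points of X is the identity) and let A be an abelian regular subgroup of G (A acts simply transitively on X). Suppose there are x ∈ X and h_1, h_2, h_3 ∈ H := N_G(A) ∩ G_x such that a^{h_3} = a^{h_1}·a^{h_2} for all a ∈ A (conjugation a^h := h^{-1}ah, the products taken in A, which is possible since h_1,h_2,h_3 normalize A). Then the center Z(G_x) of the stabilizer G_x is contained in H; in particular Z(G_x) normalizes A. -/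
/-!
Let `b := z⁻¹ a z` and let `a' ∈ A` be the element with `a' x = b x`. Evaluating the relation
`a^{h₃} = a^{h₁} a^{h₂}` at `x` gives, for every `a ∈ A`, the point identity
`a (h₂⁻¹ (h₁ (a x))) = h₃⁻¹ (h₁ (a x))`. Since `z` commutes with the `hᵢ`, this identity for `a`
and for `a'` shows that `b` and `a'` also agree at `y := z⁻¹ (h₂⁻¹ (h₁ (a x)))`, which differs
from `x` unless `a = 1`. By 2-sharpness `b = a' ∈ A`.
-/

open Equiv

namespace Subgroup

variable {X : Type*}

def IsTwoSharp (G : Subgroup (Perm X)) : Prop :=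
  ∀ g ∈ G, ∀ x y : X, x ≠ y → g x = x → g y = y → g = 1

def IsRegular (A : Subgroup (Perm X)) : Prop :=
  ∀ x y : X, ∃! a : A, (a : Perm X) x = y

theorem IsTwoSharp.eq_of_apply_eq {G : Subgroup (Perm X)} (hG : G.IsTwoSharp)
    {g₁ g₂ : Perm X} (hg₁ : g₁ ∈ G) (hg₂ : g₂ ∈ G) {x y : X} (hxy : x ≠ y)
    (hx : g₁ x = g₂ x) (hy : g₁ y = g₂ y) : g₁ = g₂ := by
  refine inv_mul_eq_one.mp (hG _ (mul_mem (inv_mem hg₁) hg₂) x y hxy ?_ ?_)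
  · simp [Perm.mul_apply, ← hx]
  · simp [Perm.mul_apply, ← hy]

theorem IsRegular.eq_of_apply_eq {A : Subgroup (Perm X)} (hA : A.IsRegular)
    {a b : Perm X} (ha : a ∈ A) (hb : b ∈ A) {u : X} (h : a u = b u) : a = b :=
  congrArg Subtype.val <|
    (hA u (a u)).unique (y₁ := ⟨a, ha⟩) (y₂ := ⟨b, hb⟩) rfl h.symm

theorem IsRegular.exists_conj_eq {A : Subgroup (Perm X)} (hA : A.IsRegular)
    {h : Perm X} {x : X} (hx : h x = x) (hn : ∀ a ∈ A, h⁻¹ * a * h ∈ A)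
    {a : Perm X} (ha : a ∈ A) : ∃ c ∈ A, h⁻¹ * c * h = a := by
  obtain ⟨⟨c, hc⟩, hcx, -⟩ := hA x (h (a x))
  refine ⟨c, hc, hA.eq_of_apply_eq (hn c hc) ha (u := x) ?_⟩
  simp [Perm.mul_apply, hx, hcx]

theorem IsRegular.apply_inv_apply_eq_of_conj_eq_mul {A : Subgroup (Perm X)}
    (hA : A.IsRegular) {h₁ h₂ h₃ : Perm X} {x : X}
    (hx₁ : h₁ x = x) (hx₂ : h₂ x = x) (hx₃ : h₃ x = x) (hn₁ : ∀ a ∈ A, h₁⁻¹ * a * h₁ ∈ A)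
    (hrel : ∀ a ∈ A, h₃⁻¹ * a * h₃ = (h₁⁻¹ * a * h₁) * (h₂⁻¹ * a * h₂))
    {a : Perm X} (ha : a ∈ A) : a (h₂⁻¹ (h₁ (a x))) = h₃⁻¹ (h₁ (a x)) := by
  obtain ⟨c, hc, rfl⟩ := hA.exists_conj_eq hx₁ hn₁ ha
  simpa [Perm.mul_apply, hx₁, hx₂, hx₃] using (DFunLike.congr_fun (hrel c hc) x).symm

end Subgroup

theorem Commute.perm_inv_apply {X : Type*} {z h : Perm X} (hzh : Commute z h) (u : X) :
    z⁻¹ (h u) = h (z⁻¹ u) :=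
  DFunLike.congr_fun hzh.inv_left.eq u

theorem statement_18_general {X : Type*} (G : Subgroup (Equiv.Perm X))
    (h2sharp : ∀ g ∈ G, ∀ x y : X, x ≠ y → g x = x → g y = y → g = 1)
    (A : Subgroup (Equiv.Perm X)) (hAG : A ≤ G)
    (hAreg : ∀ x y : X, ∃! a : A, (a : Equiv.Perm X) x = y)
    (x : X) (h₁ h₂ h₃ : Equiv.Perm X)
    (hh₁ : h₁ ∈ G) (hh₂ : h₂ ∈ G) (hh₃ : h₃ ∈ G)
    (hx₁ : h₁ x = x) (hx₂ : h₂ x = x) (hx₃ : h₃ x = x)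
    (hn₁ : ∀ a ∈ A, h₁⁻¹ * a * h₁ ∈ A)
    (hrel : ∀ a ∈ A, h₃⁻¹ * a * h₃ = (h₁⁻¹ * a * h₁) * (h₂⁻¹ * a * h₂)) :
    ∀ z ∈ G, z x = x → (∀ g ∈ G, g x = x → z * g = g * z) →
      ∀ a ∈ A, z⁻¹ * a * z ∈ A := by
  intro z hzG hzx hzc a ha
  have hG : G.IsTwoSharp := h2sharp
  have hA : A.IsRegular := hAreg
  have hz₁ : Commute z h₁ := hzc h₁ hh₁ hx₁
  have hz₂ : Commute z h₂ := hzc h₂ hh₂ hx₂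
  have hz₃ : Commute z h₃ := hzc h₃ hh₃ hx₃
  have key : ∀ a ∈ A, a (h₂⁻¹ (h₁ (a x))) = h₃⁻¹ (h₁ (a x)) := fun _ ha =>
    hA.apply_inv_apply_eq_of_conj_eq_mul hx₁ hx₂ hx₃ hn₁ hrel ha
  by_cases hax : a x = x
  · rw [hA.eq_of_apply_eq ha (one_mem A) hax, mul_one, inv_mul_cancel]
    exact one_mem A
  obtain ⟨⟨a', ha'⟩, ha'x, -⟩ := hA x (z⁻¹ (a x))
  set y := z⁻¹ (h₂⁻¹ (h₁ (a x))) with hy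
  have hxy : x ≠ y := by
    intro hxy
    rw [eq_comm, Perm.inv_eq_iff_eq, hzx, Perm.inv_eq_iff_eq, hx₂] at hxy
    exact hax (h₁.injective (hxy.trans hx₁.symm))
  suffices z⁻¹ * a * z = a' from this ▸ ha'
  refine hG.eq_of_apply_eq (mul_mem (mul_mem (inv_mem hzG) (hAG ha)) hzG) (hAG ha') hxy ?_ ?_
  · simp [Perm.mul_apply, hzx, ha'x]
  · calc (z⁻¹ * a * z) y = z⁻¹ (h₃⁻¹ (h₁ (a x))) := by
          rw [Perm.mul_apply, Perm.mul_apply, hy, ← Perm.mul_apply z, mul_inv_cancel, Perm.one_apply,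
            key a ha]
      _ = h₃⁻¹ (h₁ (a' x)) := by rw [hz₃.inv_right.perm_inv_apply, hz₁.perm_inv_apply, ha'x]
      _ = a' (h₂⁻¹ (h₁ (a' x))) := (key a' ha').symm
      _ = a' y := by rw [ha'x, ← hz₁.perm_inv_apply, ← hz₂.inv_right.perm_inv_apply]

/-- Lemma `1+2=3`.  Let `G ≤ Sym(X)` be a 2-sharp permutation group,
`A ≤ G` an abelian regular subgroup, and suppose there are `x ∈ X` and
`h₁, h₂, h₃ ∈ H := N_G(A) ∩ G_x` with `a^{h₃} = a^{h₁}·a^{h₂}` for all `a ∈ A`.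
Then `Z(G_x) ≤ H`; in particular every element of `Z(G_x)` normalises `A`. -/
theorem statement_18 {X : Type*} (G : Subgroup (Equiv.Perm X))
    (h2sharp : ∀ g ∈ G, ∀ x y : X, x ≠ y → g x = x → g y = y → g = 1)
    (A : Subgroup (Equiv.Perm X)) (hAG : A ≤ G)
    (hAcomm : ∀ a ∈ A, ∀ b ∈ A, a * b = b * a)
    (hAreg : ∀ x y : X, ∃! a : A, (a : Equiv.Perm X) x = y)
    (x : X) (h₁ h₂ h₃ : Equiv.Perm X)
    (hh₁ : h₁ ∈ G) (hh₂ : h₂ ∈ G) (hh₃ : h₃ ∈ G)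
    (hx₁ : h₁ x = x) (hx₂ : h₂ x = x) (hx₃ : h₃ x = x)
    (hn₁ : ∀ a ∈ A, h₁⁻¹ * a * h₁ ∈ A) (hn₂ : ∀ a ∈ A, h₂⁻¹ * a * h₂ ∈ A)
    (hn₃ : ∀ a ∈ A, h₃⁻¹ * a * h₃ ∈ A)
    (hrel : ∀ a ∈ A, h₃⁻¹ * a * h₃ = (h₁⁻¹ * a * h₁) * (h₂⁻¹ * a * h₂)) :
    ∀ z ∈ G, z x = x → (∀ g ∈ G, g x = x → z * g = g * z) →
      ∀ a ∈ A, z⁻¹ * a * z ∈ A :=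
  statement_18_general G h2sharp A hAG hAreg x h₁ h₂ h₃ hh₁ hh₂ hh₃ hx₁ hx₂ hx₃ hn₁ hrel
end
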